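/- Let ψ = (ψ_j)_{j≥1} be an orthonormal basis of H and set c_j = ⟨X − μ, ψ_j⟩ for j ≥ 1. Then for every j ≥ 1, the law of c_j on ℝ is the finite mixture of Gaussian measures Σ_{k=1}^K p_k · N(m_kj, τ_kj²), where m_kj = ⟨μ_k − μ, ψ_j⟩ and τ_kj² = Σ_{l≥1} ⟨φ_l, ψ_j⟩² σ_{kl}²; that is, the pushforward measure of P under c_j equals the measure Σ_{k=1}^K p_k · gaussian(m_kj, τ_kj²). -/

import Mathlib

/-!
Conditionally on `Z = k`, the coordinate `⟪X - μ, ψ j⟫` is the constant `⟪μs k - μ, ψ j⟫` plus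
the almost sure sum of the independent centred Gaussians `⟪φ l, ψ j⟫ * ξ l`. Finite sums of
independent Gaussians are Gaussian with the summed variance, and almost sure convergence carries the
Gaussian law to the limit because the characteristic functions converge pointwise. The law of total
probability over the fibres of `Z` then yields the mixture.
-/

open MeasureTheory ProbabilityTheory Filter
open scoped ENNReal NNReal RealInnerProductSpace Topology

section GaussianSums

variable {Ω : Type*} [MeasurableSpace Ω] {Q : Measure Ω}

lemma map_finsetSum_eq_gaussianReal_of_iIndepFun [IsProbabilityMeasure Q] {ι : Type*} {η : ι → Ω → ℝ}
    (hmeas : ∀ i, Measurable (η i)) (hindep : iIndepFun η Q) {m : ι → ℝ} {v : ι → ℝ≥0}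
    (hlaw : ∀ i, Q.map (η i) = gaussianReal (m i) (v i)) (s : Finset ι) :
    Q.map (∑ i ∈ s, η i) = gaussianReal (∑ i ∈ s, m i) (∑ i ∈ s, v i) := by
  classical
  induction s using Finset.induction_on with
  | empty => simp [Pi.zero_def, gaussianReal_zero_var]
  | insert i s hi ih =>
    rw [Finset.sum_insert hi, Finset.sum_insert hi, Finset.sum_insert hi, add_comm (η i),
      add_comm (m i), add_comm (v i)]
    exact gaussianReal_add_gaussianReal_of_indepFun
      (hindep.indepFun_finsetSum_of_notMem hmeas hi) ih (hlaw i)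

lemma tendsto_charFun_map_of_ae_tendsto [IsFiniteMeasure Q] {f : ℕ → Ω → ℝ} {g : Ω → ℝ}
    (hf : ∀ n, AEMeasurable (f n) Q) (hg : AEMeasurable g Q)
    (hfg : ∀ᵐ ω ∂Q, Tendsto (fun n => f n ω) atTop (𝓝 (g ω))) (t : ℝ) :
    Tendsto (fun n => charFun (Q.map (f n)) t) atTop (𝓝 (charFun (Q.map g) t)) := by
  have he : Continuous fun x : ℝ => Complex.exp (t * x * Complex.I) := by fun_prop
  simp only [charFun_apply_real]
  rw [integral_map hg he.aestronglyMeasurable]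
  simp only [fun n => integral_map (hf n) he.aestronglyMeasurable]
  refine tendsto_integral_of_dominated_convergence (fun _ => 1)
    (fun n => he.comp_aestronglyMeasurable (hf n).aestronglyMeasurable) (integrable_const 1)
    (fun n => ae_of_all _ fun ω => ?_) ?_
  · rw [← Complex.ofReal_mul]
    exact (Complex.norm_exp_ofReal_mul_I _).le
  · filter_upwards [hfg] with ω hω
    exact (he.tendsto _).comp hω

lemma tendsto_charFun_gaussianReal {m : ℕ → ℝ} {v : ℕ → ℝ≥0} {m₀ : ℝ} {v₀ : ℝ≥0}
    (hm : Tendsto m atTop (𝓝 m₀)) (hv : Tendsto v atTop (𝓝 v₀)) (t : ℝ) :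
    Tendsto (fun n => charFun (gaussianReal (m n) (v n)) t) atTop
      (𝓝 (charFun (gaussianReal m₀ v₀) t)) := by
  have hm' := (Complex.continuous_ofReal.tendsto _).comp hm
  have hv' := (Complex.continuous_ofReal.tendsto _).comp ((NNReal.continuous_coe.tendsto _).comp hv)
  simp only [charFun_gaussianReal]
  exact (((tendsto_const_nhds.mul hm').mul tendsto_const_nhds).sub
    ((hv'.mul tendsto_const_nhds).div_const _)).cexp

lemma map_eq_gaussianReal_of_ae_tendsto [IsFiniteMeasure Q] {f : ℕ → Ω → ℝ} {g : Ω → ℝ}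
    (hf : ∀ n, AEMeasurable (f n) Q)
    (hfg : ∀ᵐ ω ∂Q, Tendsto (fun n => f n ω) atTop (𝓝 (g ω)))
    {m : ℕ → ℝ} {v : ℕ → ℝ≥0} {m₀ : ℝ} {v₀ : ℝ≥0}
    (hm : Tendsto m atTop (𝓝 m₀)) (hv : Tendsto v atTop (𝓝 v₀))
    (hlaw : ∀ n, Q.map (f n) = gaussianReal (m n) (v n)) :
    Q.map g = gaussianReal m₀ v₀ := by
  refine Measure.ext_of_charFun (funext fun t => tendsto_nhds_unique ?_
    (tendsto_charFun_gaussianReal hm hv t))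
  simpa only [hlaw] using tendsto_charFun_map_of_ae_tendsto hf
    (aemeasurable_of_tendsto_metrizable_ae' hf hfg) hfg t

lemma map_eq_gaussianReal_of_hasSum_sub [IsProbabilityMeasure Q] {η : ℕ → Ω → ℝ} (hmeas : ∀ l, Measurable (η l))
    (hindep : iIndepFun η Q) {v : ℕ → ℝ≥0} (hv : Summable v)
    (hlaw : ∀ l, Q.map (η l) = gaussianReal 0 (v l)) {S : Ω → ℝ} {c : ℝ}
    (hsum : ∀ᵐ ω ∂Q, HasSum (fun l => η l ω) (S ω - c)) :
    Q.map S = gaussianReal c (∑' l, v l) := by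
  set partialSum : ℕ → Ω → ℝ := fun n ω => c + ∑ l ∈ Finset.range n, η l ω
  have hpartial_meas : ∀ n, Measurable (partialSum n) := fun n => by fun_prop
  refine map_eq_gaussianReal_of_ae_tendsto (fun n => (hpartial_meas n).aemeasurable) ?_
    tendsto_const_nhds hv.hasSum.tendsto_sum_nat fun n => ?_
  · filter_upwards [hsum] with ω hω
    simpa using hω.tendsto_sum_nat.const_add c
  · have hcomp : partialSum n = (c + ·) ∘ ∑ l ∈ Finset.range n, η l := by
      ext ω; simp [partialSum, Finset.sum_apply]
    rw [hcomp, ← Measure.map_map (measurable_const_add c) (by fun_prop),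
      map_finsetSum_eq_gaussianReal_of_iIndepFun hmeas hindep hlaw, gaussianReal_map_const_add]
    simp

end GaussianSums

lemma map_inner_sub_eq_gaussianReal {H : Type*} [NormedAddCommGroup H] [InnerProductSpace ℝ H]
    {Ω : Type*} [MeasurableSpace Ω] {Q : Measure Ω} [IsProbabilityMeasure Q]
    {φ : ℕ → H} (hφ : ∀ l, ‖φ l‖ ≤ 1) {ξ : ℕ → Ω → ℝ} (hξmeas : ∀ l, Measurable (ξ l))
    (hindep : iIndepFun ξ Q) {σ2 : ℕ → ℝ≥0} (hσ2 : Summable σ2)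
    (hlaw : ∀ l, Q.map (ξ l) = gaussianReal 0 (σ2 l)) {Y : Ω → H} {a : H}
    (hY : ∀ᵐ ω ∂Q, HasSum (fun l => ξ l ω • φ l) (Y ω - a)) (x ψ : H) :
    Q.map (fun ω => ⟪Y ω - x, ψ⟫) =
      gaussianReal ⟪a - x, ψ⟫ (∑' l, ‖⟪φ l, ψ⟫‖₊ ^ 2 * σ2 l) := by
  have hcoeff_le : ∀ l, ‖⟪φ l, ψ⟫‖₊ ^ 2 * σ2 l ≤ ‖ψ‖₊ ^ 2 * σ2 l := fun l => by
    gcongr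
    calc ‖⟪φ l, ψ⟫‖₊ ≤ ‖φ l‖₊ * ‖ψ‖₊ := nnnorm_inner_le_nnnorm _ _
      _ ≤ ‖ψ‖₊ := mul_le_of_le_one_left' (hφ l)
  refine map_eq_gaussianReal_of_hasSum_sub (η := fun l ω => ⟪φ l, ψ⟫ * ξ l ω)
    (fun l => (hξmeas l).const_mul _) (hindep.comp _ fun l => measurable_const_mul _)
    (NNReal.summable_of_le hcoeff_le (hσ2.mul_left _)) (fun l => ?_) ?_
  · change Q.map ((⟪φ l, ψ⟫ * ·) ∘ ξ l) = _
    rw [← Measure.map_map (measurable_const_mul _) (hξmeas l), hlaw l,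
      gaussianReal_map_const_mul]
    congr 1
    · ring
    · ext; simp [sq_abs]
  · filter_upwards [hY] with ω hω
    rw [← inner_sub_left, sub_sub_sub_cancel_right]
    simpa [real_inner_smul_left, real_inner_comm, mul_comm] using hω.mapL (innerSL ℝ ψ)

lemma map_eq_sum_smul_map_cond {Ω α β : Type*} [MeasurableSpace Ω] [MeasurableSpace β]
    [Fintype α] [MeasurableSpace α] [DiscreteMeasurableSpace α] {Z : Ω → α} (hZ : Measurable Z)
    (P : Measure Ω) [IsFiniteMeasure P] {g : Ω → β} (hg : Measurable g) :
    P.map g = ∑ a, P (Z ⁻¹' {a}) • (P[|Z ⁻¹' {a}]).map g := by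
  conv_lhs => rw [← sum_meas_smul_cond_fiber hZ P]
  simp only [← Measure.mapₗ_apply_of_measurable hg, map_sum, map_smul]

theorem stmt_6_general
{H : Type*} [NormedAddCommGroup H] [InnerProductSpace ℝ H]
    [MeasurableSpace H] [BorelSpace H]
    {Ω : Type*} [MeasurableSpace Ω] (P : Measure Ω) [IsProbabilityMeasure P]
    (K : ℕ) (Z : Ω → Fin K) (hZ : Measurable Z)
    (p : Fin K → ℝ) (hp : ∀ k, 0 < p k)
    (hpP : ∀ k, P (Z ⁻¹' {k}) = ENNReal.ofReal (p k))
    (μs : Fin K → H)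
    (φ : ℕ → H) (hφon : Orthonormal ℝ φ)
    (ξ : ℕ → Ω → ℝ) (hξmeas : ∀ j, Measurable (ξ j))
    (σ2 : Fin K → ℕ → ℝ≥0)
    (hσ2 : Summable fun kj : Fin K × ℕ => (σ2 kj.1 kj.2 : ℝ))
    (hindep : ∀ k, iIndepFun ξ (P[|Z ⁻¹' {k}]))
    (hgauss : ∀ k j, Measure.map (ξ j) (P[|Z ⁻¹' {k}]) = gaussianReal 0 (σ2 k j))
    (X : Ω → H) (hXmeas : Measurable X)
    (hXdec : ∀ᵐ ω ∂P, HasSum (fun j => ξ j ω • φ j) (X ω - μs (Z ω)))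
    (μ : H)
(ψ : ℕ → H) :
    ∀ j : ℕ,
      Measure.map (fun ω => ⟪X ω - μ, ψ j⟫) P =
        ∑ k, ENNReal.ofReal (p k) •
          gaussianReal ⟪μs k - μ, ψ j⟫ (∑' l, ‖⟪φ l, ψ j⟫‖₊ ^ 2 * σ2 k l) := by
  intro j
  have hcoord : Measurable fun ω => ⟪X ω - μ, ψ j⟫ :=
    ((continuous_id.sub continuous_const).inner continuous_const).measurable.comp hXmeas
  rw [map_eq_sum_smul_map_cond hZ P hcoord]
  refine Finset.sum_congr rfl fun k _ => ?_
  have hfiber : P (Z ⁻¹' {k}) ≠ 0 := by simpa [hpP] using hp k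
  have : IsProbabilityMeasure (P[|Z ⁻¹' {k}]) := cond_isProbabilityMeasure hfiber
  have hXdec_k : ∀ᵐ ω ∂P[|Z ⁻¹' {k}], HasSum (fun l => ξ l ω • φ l) (X ω - μs k) := by
    filter_upwards [cond_absolutelyContinuous.ae_le hXdec, ae_cond_mem (hZ (.singleton k))]
      with ω hω hZω
    rwa [hZω] at hω
  rw [hpP k, map_inner_sub_eq_gaussianReal (fun l => (hφon.1 l).le) hξmeas (hindep k)
    (NNReal.summable_coe.1 (hσ2.comp_injective (Prod.mk_right_injective k))) (hgauss k) hXdec_k]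

/-- The law of `c_j` is the finite Gaussian mixture `∑ k, p_k • N(m_kj, τ_kj²)`. -/
theorem stmt_6
{H : Type*} [NormedAddCommGroup H] [InnerProductSpace ℝ H] [CompleteSpace H]
    [SecondCountableTopology H] [MeasurableSpace H] [BorelSpace H]
    {Ω : Type*} [MeasurableSpace Ω] (P : Measure Ω) [IsProbabilityMeasure P]
    (K : ℕ) (hK : 1 ≤ K) (Z : Ω → Fin K) (hZ : Measurable Z)
    (p : Fin K → ℝ) (hp : ∀ k, 0 < p k) (hpsum : ∑ k, p k = 1)
    (hpP : ∀ k, P (Z ⁻¹' {k}) = ENNReal.ofReal (p k))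
    (μs : Fin K → H)
    (φ : ℕ → H) (hφon : Orthonormal ℝ φ)
    (hφtot : (Submodule.span ℝ (Set.range φ)).topologicalClosure = ⊤)
    (ξ : ℕ → Ω → ℝ) (hξmeas : ∀ j, Measurable (ξ j))
    (σ2 : Fin K → ℕ → ℝ≥0)
    (hσ2 : Summable fun kj : Fin K × ℕ => (σ2 kj.1 kj.2 : ℝ))
    (hindep : ∀ k, iIndepFun ξ (P[|Z ⁻¹' {k}]))
    (hgauss : ∀ k j, Measure.map (ξ j) (P[|Z ⁻¹' {k}]) = gaussianReal 0 (σ2 k j))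
    (X : Ω → H) (hXmeas : Measurable X)
    (hXdec : ∀ᵐ ω ∂P, HasSum (fun j => ξ j ω • φ j) (X ω - μs (Z ω)))
    (μ : H) (hμ : μ = ∑ k, p k • μs k)
(ψ : ℕ → H) (hψon : Orthonormal ℝ ψ)
    (hψtot : (Submodule.span ℝ (Set.range ψ)).topologicalClosure = ⊤) :
    ∀ j : ℕ,
      Measure.map (fun ω => ⟪X ω - μ, ψ j⟫) P =
        ∑ k, ENNReal.ofReal (p k) •
          gaussianReal ⟪μs k - μ, ψ j⟫ (∑' l, ‖⟪φ l, ψ j⟫‖₊ ^ 2 * σ2 k l) :=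
  stmt_6_general P K Z hZ p hp hpP μs φ hφon ξ hξmeas σ2 hσ2 hindep hgauss X hXmeas hXdec μ ψ
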